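/- Assume the rate coefficients satisfy the growth condition (GB) with constants C, Q and weights q_{i,k}. Let c_0 = (c_{0i}) ∈ X_{0,1}^+ and T ∈ (0,∞). Then for each i ∈ ℕ there exists a constant Γ_{2,i}(T) > 0, independent of N, such that for every integer N ≥ max(i,2) the nonnegative solution c^N of the N-truncated isolated DGED system with initial data c_j^N(0) = c_{0j} (0 ≤ j ≤ N) satisfies ∫_0^T |d c_i^N/dt (t)| dt ≤ Γ_{2,i}(T). -/

import Mathlib

open Finset

/-- Truncated operator `Q^N_{1,i}`. -/
noncomputable def QN1 (a : ℕ → ℕ → ℕ → ℝ) (N : ℕ) (c : ℕ → ℝ) (i : ℕ) : ℝ :=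
  ∑ k ∈ Finset.Icc 1 (N - i), ∑ j ∈ Finset.Icc 0 (N - k), a (i + k) j k * c (i + k) * c j

/-- Truncated operator `Q^N_{2,i}`. -/
noncomputable def QN2 (a : ℕ → ℕ → ℕ → ℝ) (N : ℕ) (c : ℕ → ℝ) (i : ℕ) : ℝ :=
  -∑ k ∈ Finset.Icc 1 (N - i), ∑ j ∈ Finset.Icc k N, a j i k * c j * c i

/-- Truncated operator `Q^N_{3,i}`. -/
noncomputable def QN3 (a : ℕ → ℕ → ℕ → ℝ) (N : ℕ) (c : ℕ → ℝ) (i : ℕ) : ℝ :=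
  ∑ k ∈ Finset.Icc 1 i, ∑ j ∈ Finset.Icc k N, a j (i - k) k * c j * c (i - k)

/-- Truncated operator `Q^N_{4,i}`. -/
noncomputable def QN4 (a : ℕ → ℕ → ℕ → ℝ) (N : ℕ) (c : ℕ → ℝ) (i : ℕ) : ℝ :=
  -∑ k ∈ Finset.Icc 1 i, ∑ j ∈ Finset.Icc 0 (N - k), a i j k * c j * c i

/-- `c` is a solution of the `N`-truncated isolated DGED system on the set `I`. -/
def IsTruncSolIso (a : ℕ → ℕ → ℕ → ℝ) (N : ℕ) (I : Set ℝ) (c : ℕ → ℝ → ℝ) : Prop :=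
  ∀ t ∈ I,
    HasDerivAt (c 0) (QN1 a N (fun n => c n t) 0 + QN2 a N (fun n => c n t) 0) t ∧
    (∀ i, 1 ≤ i → i ≤ N - 1 →
      HasDerivAt (c i)
        (QN1 a N (fun n => c n t) i + QN2 a N (fun n => c n t) i +
          QN3 a N (fun n => c n t) i + QN4 a N (fun n => c n t) i) t) ∧
    HasDerivAt (c N) (QN3 a N (fun n => c n t) N + QN4 a N (fun n => c n t) N) t


/-- Growth condition (GB) on the rate coefficients. -/
def GB (a : ℕ → ℕ → ℕ → ℝ) (C Q : ℝ) (q : ℕ → ℕ → ℝ) : Prop :=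
  1 ≤ C ∧ 1 ≤ Q ∧ (∀ i k, 0 ≤ q i k) ∧
  (∀ i : ℕ, 1 ≤ i →
    ∑ k ∈ Finset.Icc 1 i, (k : ℝ) * ((i : ℝ) - k + 1) * q i k ≤ Q * i) ∧
  (∀ i j k : ℕ, 1 ≤ k → k ≤ i → 1 ≤ j →
    a i j k ≤ C * ((i : ℝ) - k + 1) * ((j : ℝ) + k) * q i k)

/-! Conservation of the weighted mass `∑ (1 + j) c_j` bounds it along every truncated solution by
`M = ∑ (1 + j) c_{0j}`. Split `dc_i/dt = G_i - L_i` into the gain `G_i = Q₁ + Q₃ ≥ 0` and the loss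
`L_i = -(Q₂ + Q₄) ≥ 0`; integrating, `∫ L_i ≤ ∫ G_i + c_i(0)`, hence `∫ |dc_i/dt| ≤ 2 ∫ G_i + M`.
By (GB) every rate `a(p,j;k)` with `j ≥ 1` is at most `C Q (1 + p)(1 + j)`, so the gain is at most
`2 C Q M²` plus the terms in which a cluster of size `0` takes part, and these are dominated by
the loss rate `-Q₂,₀` of `c_0`. Since `a(p,0;p) = 0`, the gain of `c_0` itself is at most `C Q M²`,
and the same integration at `i = 0` gives `∫ -Q₂,₀ ≤ T C Q M² + M`. -/

lemma sum_sum_le_mul_mul {ι κ : Type*} {s : Finset ι} {u : ι → Finset κ} {f : ι → κ → ℝ}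
    {x : ι → ℝ} {y : κ → ℝ} {K A B : ℝ} (hf : ∀ k ∈ s, ∀ j ∈ u k, f k j ≤ K * (x k * y j))
    (hK : 0 ≤ K) (hx : ∀ k ∈ s, 0 ≤ x k) (hA : ∑ k ∈ s, x k ≤ A)
    (hB : ∀ k ∈ s, ∑ j ∈ u k, y j ≤ B) (hB₀ : 0 ≤ B) :
    ∑ k ∈ s, ∑ j ∈ u k, f k j ≤ K * (A * B) :=
  calc ∑ k ∈ s, ∑ j ∈ u k, f k j ≤ ∑ k ∈ s, K * (x k * B) := by
        refine sum_le_sum fun k hk => ?_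
        calc ∑ j ∈ u k, f k j ≤ ∑ j ∈ u k, K * (x k * y j) := sum_le_sum (hf k hk)
          _ = K * (x k * ∑ j ∈ u k, y j) := by rw [← mul_sum, ← mul_sum]
          _ ≤ K * (x k * B) := by gcongr; exacts [hx k hk, hB k hk]
    _ = K * ((∑ k ∈ s, x k) * B) := by rw [sum_mul, mul_sum]
    _ ≤ K * (A * B) := by gcongr

section fundamentalTheorem
variable {f G L : ℝ → ℝ} {T : ℝ} (hT : 0 ≤ T)
  (hf : ∀ t ∈ Set.Icc 0 T, HasDerivAt f (G t - L t) t)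
  (hG : ContinuousOn G (Set.Icc 0 T)) (hL : ContinuousOn L (Set.Icc 0 T))
include hT hf hG hL

lemma integral_le_integral_add_of_hasDerivAt_sub (hfT : 0 ≤ f T) :
    ∫ t in (0 : ℝ)..T, L t ≤ (∫ t in (0 : ℝ)..T, G t) + f 0 := by
  have hFTC : ∫ t in (0 : ℝ)..T, (G t - L t) = f T - f 0 :=
    intervalIntegral.integral_eq_sub_of_hasDerivAt
      (fun t ht => hf t (Set.uIcc_of_le hT ▸ ht)) ((hG.sub hL).intervalIntegrable_of_Icc hT)
  rw [intervalIntegral.integral_sub (hG.intervalIntegrable_of_Icc hT)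
    (hL.intervalIntegrable_of_Icc hT)] at hFTC
  linarith

lemma integral_abs_deriv_le_of_hasDerivAt_sub (hG₀ : ∀ t ∈ Set.Icc 0 T, 0 ≤ G t)
    (hL₀ : ∀ t ∈ Set.Icc 0 T, 0 ≤ L t) (hfT : 0 ≤ f T) :
    ∫ t in (0 : ℝ)..T, |deriv f t| ≤ 2 * (∫ t in (0 : ℝ)..T, G t) + f 0 :=
  calc ∫ t in (0 : ℝ)..T, |deriv f t| = ∫ t in (0 : ℝ)..T, |G t - L t| :=
        intervalIntegral.integral_congr fun t ht => by
          rw [(hf t (Set.uIcc_of_le hT ▸ ht)).deriv]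
    _ ≤ ∫ t in (0 : ℝ)..T, (G t + L t) :=
        intervalIntegral.integral_mono_on hT ((hG.sub hL).abs.intervalIntegrable_of_Icc hT)
          ((hG.add hL).intervalIntegrable_of_Icc hT) fun t ht =>
            abs_sub_le_iff.mpr ⟨by linarith [hL₀ t ht], by linarith [hG₀ t ht]⟩
    _ = (∫ t in (0 : ℝ)..T, G t) + ∫ t in (0 : ℝ)..T, L t :=
        intervalIntegral.integral_add (hG.intervalIntegrable_of_Icc hT)
          (hL.intervalIntegrable_of_Icc hT)
    _ ≤ 2 * (∫ t in (0 : ℝ)..T, G t) + f 0 := by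
        linarith [integral_le_integral_add_of_hasDerivAt_sub hT hf hG hL hfT]

end fundamentalTheorem

/-- `(p, k, j)` is the event in which a cluster of size `p` hands `k` particles to a cluster of
size `j`, at rate `a p j k c_p c_j`. It is counted in `Q₁` at size `p - k`, in `Q₂` at `j`, in `Q₃`
at `j + k` and in `Q₄` at `p`, and these weights `1 + size` cancel. -/
def reactions (N : ℕ) : Finset (ℕ × ℕ × ℕ) :=
  (range (N + 1) ×ˢ range (N + 1) ×ˢ range (N + 1)).filter
    fun x => 1 ≤ x.2.1 ∧ x.2.1 ≤ x.1 ∧ x.2.2 + x.2.1 ≤ N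

lemma mem_reactions {N : ℕ} {x : ℕ × ℕ × ℕ} :
    x ∈ reactions N ↔ x.1 ≤ N ∧ 1 ≤ x.2.1 ∧ x.2.1 ≤ x.1 ∧ x.2.2 + x.2.1 ≤ N := by
  simp only [reactions, mem_filter, mem_product, mem_range]
  omega

section conservation
variable (a : ℕ → ℕ → ℕ → ℝ) (N : ℕ) (d : ℕ → ℝ)

lemma sum_mul_QN1 :
    ∑ i ∈ range (N + 1), (1 + (i : ℝ)) * QN1 a N d i
      = ∑ x ∈ reactions N, (1 + (x.1 : ℝ) - x.2.1) * (a x.1 x.2.2 x.2.1 * d x.1 * d x.2.2) := by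
  simp_rw [QN1, mul_sum, sum_sigma']
  refine sum_nbij' (fun x => (x.1 + x.2.1, x.2.1, x.2.2)) (fun y => ⟨y.1 - y.2.1, y.2.1, y.2.2⟩)
    ?_ ?_ ?_ ?_ ?_ <;> rintro ⟨p, k, j⟩ h <;>
    simp only [mem_sigma, mem_range, mem_Icc, mem_reactions, Sigma.mk.injEq,
      Prod.mk.injEq] at h ⊢ <;>
    first | omega | (simp only [heq_eq_eq, and_true]; omega) | (push_cast; ring)

lemma sum_mul_QN2 :
    ∑ i ∈ range (N + 1), (1 + (i : ℝ)) * QN2 a N d i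
      = -∑ x ∈ reactions N, (1 + (x.2.2 : ℝ)) * (a x.1 x.2.2 x.2.1 * d x.1 * d x.2.2) := by
  simp_rw [QN2, mul_neg, mul_sum, sum_neg_distrib, sum_sigma']
  congr 1
  refine sum_nbij' (fun x => (x.2.2, x.2.1, x.1)) (fun y => ⟨y.2.2, y.2.1, y.1⟩)
    ?_ ?_ ?_ ?_ ?_ <;> rintro ⟨p, k, j⟩ h <;>
    simp only [mem_sigma, mem_range, mem_Icc, mem_reactions] at h ⊢ <;>
    omega

lemma sum_mul_QN3 :
    ∑ i ∈ range (N + 1), (1 + (i : ℝ)) * QN3 a N d i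
      = ∑ x ∈ reactions N, (1 + (x.2.2 : ℝ) + x.2.1) * (a x.1 x.2.2 x.2.1 * d x.1 * d x.2.2) := by
  simp_rw [QN3, mul_sum, sum_sigma']
  refine sum_nbij' (fun x => (x.2.2, x.2.1, x.1 - x.2.1)) (fun y => ⟨y.2.2 + y.2.1, y.2.1, y.1⟩)
    ?_ ?_ ?_ ?_ ?_ <;> rintro ⟨p, k, j⟩ h <;>
    simp only [mem_sigma, mem_range, mem_Icc, mem_reactions, Sigma.mk.injEq,
      Prod.mk.injEq] at h ⊢ <;>
    first
      | omega
      | (simp only [heq_eq_eq, and_true, true_and]; omega)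
      | (rw [Nat.cast_sub (by omega : k ≤ p)]; ring)

lemma sum_mul_QN4 :
    ∑ i ∈ range (N + 1), (1 + (i : ℝ)) * QN4 a N d i
      = -∑ x ∈ reactions N, (1 + (x.1 : ℝ)) * (a x.1 x.2.2 x.2.1 * d x.1 * d x.2.2) := by
  simp_rw [QN4, mul_neg, mul_sum, sum_neg_distrib, sum_sigma']
  congr 1
  refine sum_nbij' (fun x => (x.1, x.2.1, x.2.2)) (fun y => ⟨y.1, y.2.1, y.2.2⟩)
    ?_ ?_ ?_ ?_ ?_ <;> rintro ⟨p, k, j⟩ h <;>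
    simp only [mem_sigma, mem_range, mem_Icc, mem_reactions] at h ⊢ <;>
    first | omega | ring

lemma sum_mul_QN_eq_zero :
    ∑ i ∈ range (N + 1),
      (1 + (i : ℝ)) * (QN1 a N d i + QN2 a N d i + QN3 a N d i + QN4 a N d i) = 0 := by
  simp only [mul_add, sum_add_distrib]
  rw [sum_mul_QN1, sum_mul_QN2, sum_mul_QN3, sum_mul_QN4, ← sub_eq_add_neg, ← sub_eq_add_neg,
    ← sum_sub_distrib, ← sum_add_distrib, ← sum_sub_distrib]
  exact sum_eq_zero fun x _ => by ring

end conservation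

def weightedMass (N : ℕ) (d : ℕ → ℝ) : ℝ :=
  ∑ j ∈ range (N + 1), (1 + (j : ℝ)) * d j

section weightedMass
variable {N : ℕ} {d : ℕ → ℝ} (hd : ∀ j ≤ N, 0 ≤ d j)
include hd

lemma sum_comp_le_weightedMass {s : Finset ℕ} {g : ℕ → ℕ}
    (hg : Set.InjOn g s) (hgN : ∀ k ∈ s, g k ≤ N) :
    ∑ k ∈ s, (1 + (g k : ℝ)) * d (g k) ≤ weightedMass N d := by
  rw [← sum_image (f := fun m : ℕ => (1 + (m : ℝ)) * d m) hg]
  refine sum_le_sum_of_subset_of_nonneg ?_ fun j hj _ => ?_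
  · intro m hm
    obtain ⟨k, hk, rfl⟩ := mem_image.mp hm
    exact mem_range.mpr (Nat.lt_succ_of_le (hgN k hk))
  · exact mul_nonneg (by positivity) (hd j (Nat.lt_succ_iff.mp (mem_range.mp hj)))

lemma weightedMass_nonneg : 0 ≤ weightedMass N d :=
  sum_nonneg fun j hj => mul_nonneg (by positivity) (hd j (Nat.lt_succ_iff.mp (mem_range.mp hj)))

lemma sum_le_weightedMass {s : Finset ℕ} (hs : ∀ j ∈ s, j ≤ N) :
    ∑ j ∈ s, (1 + (j : ℝ)) * d j ≤ weightedMass N d :=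
  sum_comp_le_weightedMass hd (Set.injOn_id _) hs

lemma le_weightedMass {i : ℕ} (hi : i ≤ N) : d i ≤ weightedMass N d := by
  have := sum_le_weightedMass hd (s := {i}) (by simpa using hi)
  rw [sum_singleton] at this
  nlinarith [hd i hi, (Nat.cast_nonneg i : (0 : ℝ) ≤ i)]

end weightedMass

section rates
variable {a : ℕ → ℕ → ℕ → ℝ} {C Q : ℝ} {q : ℕ → ℕ → ℝ}

lemma GB.zero_le_mul (h : GB a C Q q) : 0 ≤ C * Q :=
  mul_nonneg (by linarith [h.1]) (by linarith [h.2.1])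

lemma GB.rate_le (h : GB a C Q q) {p j k : ℕ} (hk : 1 ≤ k) (hkp : k ≤ p) (hj : 1 ≤ j) :
    a p j k ≤ C * Q * ((1 + (p : ℝ)) * (1 + j)) := by
  obtain ⟨hC, hQ, hq, hsum, ha⟩ := h
  have hk' : (1 : ℝ) ≤ k := by exact_mod_cast hk
  have hkp' : (k : ℝ) ≤ p := by exact_mod_cast hkp
  have hterm : (k : ℝ) * (p - k + 1) * q p k ≤ Q * p :=
    (single_le_sum (f := fun k' : ℕ => (k' : ℝ) * (p - k' + 1) * q p k')
      (fun k' hk' => by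
        have : (k' : ℝ) ≤ p := by exact_mod_cast (mem_Icc.mp hk').2
        exact mul_nonneg (mul_nonneg k'.cast_nonneg (by linarith)) (hq p k'))
      (mem_Icc.mpr ⟨hk, hkp⟩)).trans (hsum p (hk.trans hkp))
  have hjk : (j : ℝ) + k ≤ k * (1 + j) := by nlinarith [(Nat.cast_nonneg j : (0 : ℝ) ≤ j)]
  have hCj : 0 ≤ C * (1 + j) := by positivity
  calc a p j k ≤ C * (p - k + 1) * (j + k) * q p k := ha p j k hk hkp hj
    _ ≤ C * (p - k + 1) * (k * (1 + j)) * q p k :=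
        mul_le_mul_of_nonneg_right (mul_le_mul_of_nonneg_left hjk (by nlinarith)) (hq p k)
    _ = C * (1 + j) * (k * (p - k + 1) * q p k) := by ring
    _ ≤ C * (1 + j) * (Q * p) := mul_le_mul_of_nonneg_left hterm hCj
    _ ≤ C * Q * ((1 + p) * (1 + j)) := by nlinarith

lemma GB.rate_mul_le (h : GB a C Q q) {p j k : ℕ} (hk : 1 ≤ k) (hkp : k ≤ p) (hj : 1 ≤ j)
    {d : ℕ → ℝ} (hdp : 0 ≤ d p) (hdj : 0 ≤ d j) :
    a p j k * d p * d j ≤ C * Q * ((1 + (p : ℝ)) * d p * ((1 + (j : ℝ)) * d j)) :=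
  calc a p j k * d p * d j ≤ C * Q * ((1 + (p : ℝ)) * (1 + j)) * d p * d j := by
        gcongr; exact h.rate_le hk hkp hj
    _ = C * Q * ((1 + (p : ℝ)) * d p * ((1 + (j : ℝ)) * d j)) := by ring

end rates

section splitting
variable (a : ℕ → ℕ → ℕ → ℝ) (N : ℕ) (d : ℕ → ℝ)

lemma QN1_eq_add (i : ℕ) :
    QN1 a N d i = ∑ k ∈ Icc 1 (N - i), a (i + k) 0 k * d (i + k) * d 0
      + ∑ k ∈ Icc 1 (N - i), ∑ j ∈ Icc 1 (N - k), a (i + k) j k * d (i + k) * d j := by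
  rw [QN1, ← sum_add_distrib]
  refine sum_congr rfl fun k _ => ?_
  rw [← insert_Icc_add_one_left_eq_Icc (Nat.zero_le _), sum_insert (by simp), zero_add]

lemma QN3_eq_add {i : ℕ} (hi : 1 ≤ i) :
    QN3 a N d i = ∑ j ∈ Icc i N, a j 0 i * d j * d 0
      + ∑ k ∈ Icc 1 (i - 1), ∑ j ∈ Icc k N, a j (i - k) k * d j * d (i - k) := by
  rw [QN3, ← insert_Icc_sub_one_right_eq_Icc hi, sum_insert (by simp; omega), Nat.sub_self]

@[simp] lemma QN3_zero : QN3 a N d 0 = 0 := by simp [QN3]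

@[simp] lemma QN4_zero : QN4 a N d 0 = 0 := by simp [QN4]

lemma neg_QN2_zero :
    -QN2 a N d 0 = ∑ k ∈ Icc 1 N, ∑ j ∈ Icc k N, a j 0 k * d j * d 0 := by
  rw [QN2, neg_neg, Nat.sub_zero]

end splitting

section bounds
variable {a : ℕ → ℕ → ℕ → ℝ} {C Q : ℝ} {q : ℕ → ℕ → ℝ} {N i : ℕ} {d : ℕ → ℝ}
  (hd : ∀ j ≤ N, 0 ≤ d j)
include hd

lemma QN1_nonneg (ha : ∀ i j k, 0 ≤ a i j k) : 0 ≤ QN1 a N d i :=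
  sum_nonneg fun k hk => sum_nonneg fun j hj => by
    simp only [mem_Icc] at hk hj
    exact mul_nonneg (mul_nonneg (ha _ _ _) (hd _ (by omega))) (hd _ (by omega))

lemma QN2_nonpos (ha : ∀ i j k, 0 ≤ a i j k) : QN2 a N d i ≤ 0 :=
  neg_nonpos.mpr <| sum_nonneg fun k hk => sum_nonneg fun j hj => by
    simp only [mem_Icc] at hk hj
    exact mul_nonneg (mul_nonneg (ha _ _ _) (hd _ (by omega))) (hd _ (by omega))

lemma QN3_nonneg (ha : ∀ i j k, 0 ≤ a i j k) (hi : i ≤ N) : 0 ≤ QN3 a N d i :=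
  sum_nonneg fun k hk => sum_nonneg fun j hj => by
    simp only [mem_Icc] at hk hj
    exact mul_nonneg (mul_nonneg (ha _ _ _) (hd _ (by omega))) (hd _ (by omega))

lemma QN4_nonpos (ha : ∀ i j k, 0 ≤ a i j k) (hi : i ≤ N) : QN4 a N d i ≤ 0 :=
  neg_nonpos.mpr <| sum_nonneg fun k hk => sum_nonneg fun j hj => by
    simp only [mem_Icc] at hk hj
    exact mul_nonneg (mul_nonneg (ha _ _ _) (hd _ (by omega))) (hd _ (by omega))

lemma QN1_tail_le (h : GB a C Q q) :
    ∑ k ∈ Icc 1 (N - i), ∑ j ∈ Icc 1 (N - k), a (i + k) j k * d (i + k) * d j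
      ≤ C * Q * (weightedMass N d * weightedMass N d) := by
  refine sum_sum_le_mul_mul (x := fun k => (1 + ((i + k : ℕ) : ℝ)) * d (i + k))
    (y := fun j : ℕ => (1 + (j : ℝ)) * d j)
    (fun k hk j hj => ?_) h.zero_le_mul (fun k hk => ?_) ?_ (fun k hk => ?_)
    (weightedMass_nonneg hd)
  · simp only [mem_Icc] at hk hj
    exact h.rate_mul_le hk.1 (by omega) hj.1 (hd _ (by omega)) (hd _ (by omega))
  · simp only [mem_Icc] at hk
    exact mul_nonneg (by positivity) (hd _ (by omega))
  · exact sum_comp_le_weightedMass hd (add_right_injective i).injOn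
      fun k hk => by simp only [mem_Icc] at hk; omega
  · exact sum_le_weightedMass hd fun j hj => by simp only [mem_Icc] at hj; omega

lemma QN3_tail_le (h : GB a C Q q) (hi : i ≤ N) :
    ∑ k ∈ Icc 1 (i - 1), ∑ j ∈ Icc k N, a j (i - k) k * d j * d (i - k)
      ≤ C * Q * (weightedMass N d * weightedMass N d) := by
  refine sum_sum_le_mul_mul (x := fun k => (1 + ((i - k : ℕ) : ℝ)) * d (i - k))
    (y := fun j : ℕ => (1 + (j : ℝ)) * d j)
    (fun k hk j hj => ?_) h.zero_le_mul (fun k hk => ?_) ?_ (fun k hk => ?_)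
    (weightedMass_nonneg hd)
  · simp only [mem_Icc] at hk hj
    exact (h.rate_mul_le hk.1 hj.1 (by omega) (hd _ (by omega)) (hd _ (by omega))).trans_eq
      (by ring)
  · simp only [mem_Icc] at hk
    exact mul_nonneg (by positivity) (hd _ (by omega))
  · refine sum_comp_le_weightedMass hd (fun k hk l hl hkl => ?_)
      fun k hk => by simp only [mem_Icc] at hk; omega
    simp only [coe_Icc, Set.mem_Icc] at hk hl
    omega
  · exact sum_le_weightedMass hd fun j hj => by simp only [mem_Icc] at hj; omega

lemma QN1_head_le (ha : ∀ i j k, 0 ≤ a i j k) :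
    ∑ k ∈ Icc 1 (N - i), a (i + k) 0 k * d (i + k) * d 0 ≤ -QN2 a N d 0 := by
  have hterm : ∀ k j, j ≤ N → 0 ≤ a j 0 k * d j * d 0 :=
    fun k j hj => mul_nonneg (mul_nonneg (ha _ _ _) (hd _ hj)) (hd _ (Nat.zero_le N))
  rw [neg_QN2_zero]
  calc ∑ k ∈ Icc 1 (N - i), a (i + k) 0 k * d (i + k) * d 0
      ≤ ∑ k ∈ Icc 1 (N - i), ∑ j ∈ Icc k N, a j 0 k * d j * d 0 :=
        sum_le_sum fun k hk => single_le_sum (fun j hj => hterm k j (mem_Icc.mp hj).2)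
          (by simp only [mem_Icc] at hk ⊢; omega)
    _ ≤ ∑ k ∈ Icc 1 N, ∑ j ∈ Icc k N, a j 0 k * d j * d 0 :=
        sum_le_sum_of_subset_of_nonneg (Icc_subset_Icc_right (Nat.sub_le N i))
          fun k _ _ => sum_nonneg fun j hj => hterm k j (mem_Icc.mp hj).2

lemma QN3_head_le (ha : ∀ i j k, 0 ≤ a i j k) (hi₁ : 1 ≤ i) (hi : i ≤ N) :
    ∑ j ∈ Icc i N, a j 0 i * d j * d 0 ≤ -QN2 a N d 0 := by
  rw [neg_QN2_zero]
  exact single_le_sum (f := fun k => ∑ j ∈ Icc k N, a j 0 k * d j * d 0)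
    (fun k _ => sum_nonneg fun j hj =>
      mul_nonneg (mul_nonneg (ha _ _ _) (hd _ (mem_Icc.mp hj).2)) (hd _ (Nat.zero_le N)))
    (mem_Icc.mpr ⟨hi₁, hi⟩)

lemma GB.mul_weightedMass_sq_le (h : GB a C Q q) {M : ℝ} (hM : weightedMass N d ≤ M) :
    C * Q * (weightedMass N d * weightedMass N d) ≤ C * Q * (M * M) :=
  mul_le_mul_of_nonneg_left (mul_self_le_mul_self (weightedMass_nonneg hd) hM) h.zero_le_mul

lemma QN1_le (ha : ∀ i j k, 0 ≤ a i j k) (h : GB a C Q q) :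
    QN1 a N d i ≤ -QN2 a N d 0 + C * Q * (weightedMass N d * weightedMass N d) := by
  rw [QN1_eq_add]
  exact add_le_add (QN1_head_le hd ha) (QN1_tail_le hd h)

lemma QN1_zero_le (hzero : ∀ p : ℕ, 1 ≤ p → a p 0 p = 0) (h : GB a C Q q) :
    QN1 a N d 0 ≤ C * Q * (weightedMass N d * weightedMass N d) := by
  have hhead : ∑ k ∈ Icc 1 (N - 0), a (0 + k) 0 k * d (0 + k) * d 0 = 0 :=
    sum_eq_zero fun k hk => by rw [zero_add, hzero k (mem_Icc.mp hk).1, zero_mul, zero_mul]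
  rw [QN1_eq_add, hhead, zero_add]
  exact QN1_tail_le hd h

lemma QN3_le (ha : ∀ i j k, 0 ≤ a i j k) (h : GB a C Q q) (hi : i ≤ N) :
    QN3 a N d i ≤ -QN2 a N d 0 + C * Q * (weightedMass N d * weightedMass N d) := by
  rcases Nat.eq_zero_or_pos i with rfl | hi₁
  · have := mul_nonneg h.zero_le_mul (mul_self_nonneg (weightedMass N d))
    linarith [QN3_zero a N d, QN2_nonpos hd (i := 0) ha]
  · rw [QN3_eq_add _ _ _ hi₁]
    exact add_le_add (QN3_head_le hd ha hi₁ hi) (QN3_tail_le hd h hi)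

lemma QN1_add_QN3_le (ha : ∀ i j k, 0 ≤ a i j k) (h : GB a C Q q) (hi : i ≤ N) {M : ℝ}
    (hM : weightedMass N d ≤ M) :
    QN1 a N d i + QN3 a N d i ≤ 2 * -QN2 a N d 0 + 2 * (C * Q * (M * M)) := by
  have := h.mul_weightedMass_sq_le hd hM
  linarith [QN1_le hd (i := i) ha h, QN3_le hd ha h hi]

end bounds

section continuity
variable (a : ℕ → ℕ → ℕ → ℝ) {N : ℕ} (i : ℕ) {c : ℕ → ℝ → ℝ} {I : Set ℝ}
  (hc : ∀ j ≤ N, ContinuousOn (c j) I)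
include hc

lemma continuousOn_QN1 : ContinuousOn (fun t => QN1 a N (fun n => c n t) i) I :=
  continuousOn_finsetSum _ fun k hk => continuousOn_finsetSum _ fun j hj => by
    simp only [mem_Icc] at hk hj
    exact (continuousOn_const.mul (hc _ (by omega))).mul (hc _ (by omega))

lemma continuousOn_QN2 : ContinuousOn (fun t => QN2 a N (fun n => c n t) i) I :=
  ContinuousOn.neg <| continuousOn_finsetSum _ fun k hk => continuousOn_finsetSum _ fun j hj => by
    simp only [mem_Icc] at hk hj
    exact (continuousOn_const.mul (hc _ (by omega))).mul (hc _ (by omega))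

lemma continuousOn_QN3 (hi : i ≤ N) : ContinuousOn (fun t => QN3 a N (fun n => c n t) i) I :=
  continuousOn_finsetSum _ fun k hk => continuousOn_finsetSum _ fun j hj => by
    simp only [mem_Icc] at hk hj
    exact (continuousOn_const.mul (hc _ (by omega))).mul (hc _ (by omega))

lemma continuousOn_QN4 (hi : i ≤ N) : ContinuousOn (fun t => QN4 a N (fun n => c n t) i) I :=
  ContinuousOn.neg <| continuousOn_finsetSum _ fun k hk => continuousOn_finsetSum _ fun j hj => by
    simp only [mem_Icc] at hk hj
    exact (continuousOn_const.mul (hc _ (by omega))).mul (hc _ (by omega))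

end continuity

namespace IsTruncSolIso
variable {a : ℕ → ℕ → ℕ → ℝ} {N : ℕ} {I : Set ℝ} {c : ℕ → ℝ → ℝ}

lemma hasDerivAt (hsol : IsTruncSolIso a N I c) {j : ℕ} (hj : j ≤ N) {t : ℝ} (ht : t ∈ I) :
    HasDerivAt (c j) (QN1 a N (fun n => c n t) j + QN2 a N (fun n => c n t) j +
      QN3 a N (fun n => c n t) j + QN4 a N (fun n => c n t) j) t := by
  obtain ⟨h₀, hmid, hN⟩ := hsol t ht
  rcases eq_or_ne j 0 with rfl | hj₀
  · simpa using h₀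
  rcases eq_or_ne j N with rfl | hjN
  · simpa [QN1, QN2] using hN
  exact hmid j (by omega) (by omega)

lemma continuousOn (hsol : IsTruncSolIso a N I c) {j : ℕ} (hj : j ≤ N) : ContinuousOn (c j) I :=
  fun _ ht => (hsol.hasDerivAt hj ht).continuousAt.continuousWithinAt

lemma weightedMass_eq {T : ℝ} (hsol : IsTruncSolIso a N (Set.Icc 0 T) c) {t : ℝ}
    (ht : t ∈ Set.Icc 0 T) :
    weightedMass N (fun n => c n t) = weightedMass N (fun n => c n 0) := by
  refine constant_of_has_deriv_right_zero (f := fun t => weightedMass N (fun n => c n t))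
    (continuousOn_finsetSum _ fun j hj => continuousOn_const.mul
      (hsol.continuousOn (Nat.lt_succ_iff.mp (mem_range.mp hj)))) (fun s hs => ?_) t ht
  have hderiv := HasDerivAt.fun_sum fun j hj => (hsol.hasDerivAt (Nat.lt_succ_iff.mp
    (mem_range.mp hj)) (Set.Ico_subset_Icc_self hs)).const_mul (1 + (j : ℝ))
  rw [sum_mul_QN_eq_zero] at hderiv
  exact hderiv.hasDerivWithinAt

variable {C Q M T : ℝ} {q : ℕ → ℕ → ℝ} (hzero : ∀ p : ℕ, 1 ≤ p → a p 0 p = 0) (hGB : GB a C Q q)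
  (hT : 0 ≤ T) (hsol : IsTruncSolIso a N (Set.Icc 0 T) c)
  (hpos : ∀ j ≤ N, ∀ t ∈ Set.Icc 0 T, 0 ≤ c j t)
  (hM : ∀ t ∈ Set.Icc 0 T, weightedMass N (fun n => c n t) ≤ M)
include hzero hGB hT hsol hpos hM

lemma integral_neg_QN2_zero_le :
    ∫ t in (0 : ℝ)..T, -QN2 a N (fun n => c n t) 0 ≤ T * (C * Q * (M * M)) + M := by
  have hc := fun j (hj : j ≤ N) => hsol.continuousOn hj
  have hloss := integral_le_integral_add_of_hasDerivAt_sub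
    (G := fun t => QN1 a N (fun n => c n t) 0) (L := fun t => -QN2 a N (fun n => c n t) 0) hT
    (fun t ht => (hsol.hasDerivAt (Nat.zero_le N) ht).congr_deriv (by simp))
    (continuousOn_QN1 a 0 hc) (continuousOn_QN2 a 0 hc).neg (hpos 0 (Nat.zero_le N) T ⟨hT, le_rfl⟩)
  have hgain : ∫ t in (0 : ℝ)..T, QN1 a N (fun n => c n t) 0 ≤ T * (C * Q * (M * M)) := by
    have := intervalIntegral.integral_mono_on hT
      ((continuousOn_QN1 a 0 hc).intervalIntegrable_of_Icc hT)
      (intervalIntegrable_const (μ := MeasureTheory.volume)) fun t ht =>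
        (QN1_zero_le (fun j hj => hpos j hj t ht) hzero hGB).trans
          (hGB.mul_weightedMass_sq_le (fun j hj => hpos j hj t ht) (hM t ht))
    rwa [intervalIntegral.integral_const, sub_zero, smul_eq_mul] at this
  have hc₀ : c 0 0 ≤ M := (le_weightedMass (fun j hj => hpos j hj 0 ⟨le_rfl, hT⟩)
    (Nat.zero_le N)).trans (hM 0 ⟨le_rfl, hT⟩)
  linarith

lemma integral_abs_deriv_le_of_weightedMass_le (ha : ∀ i j k, 0 ≤ a i j k) {i : ℕ}
    (hi : i ≤ N) :
    ∫ t in (0 : ℝ)..T, |deriv (c i) t| ≤ 5 * M + 8 * T * (C * Q * (M * M)) := by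
  have hc := fun j (hj : j ≤ N) => hsol.continuousOn hj
  have hd := fun t (ht : t ∈ Set.Icc 0 T) j (hj : j ≤ N) => hpos j hj t ht
  have hgain_cont := (continuousOn_QN1 a i hc).add (continuousOn_QN3 a i hc hi)
  have habs := integral_abs_deriv_le_of_hasDerivAt_sub
    (G := fun t => QN1 a N (fun n => c n t) i + QN3 a N (fun n => c n t) i)
    (L := fun t => -(QN2 a N (fun n => c n t) i + QN4 a N (fun n => c n t) i)) hT
    (fun t ht => (hsol.hasDerivAt hi ht).congr_deriv (by ring)) hgain_cont
    ((continuousOn_QN2 a i hc).add (continuousOn_QN4 a i hc hi)).neg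
    (fun t ht => add_nonneg (QN1_nonneg (hd t ht) ha) (QN3_nonneg (hd t ht) ha hi))
    (fun t ht => neg_nonneg.mpr
      (add_nonpos (QN2_nonpos (hd t ht) ha) (QN4_nonpos (hd t ht) ha hi)))
    (hpos i hi T ⟨hT, le_rfl⟩)
  have hR : IntervalIntegrable (fun t => -QN2 a N (fun n => c n t) 0) MeasureTheory.volume 0 T :=
    (continuousOn_QN2 a 0 hc).neg.intervalIntegrable_of_Icc hT
  have hgain : ∫ t in (0 : ℝ)..T, (QN1 a N (fun n => c n t) i + QN3 a N (fun n => c n t) i)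
      ≤ 2 * (∫ t in (0 : ℝ)..T, -QN2 a N (fun n => c n t) 0) + T * (2 * (C * Q * (M * M))) :=
    calc _ ≤ ∫ t in (0 : ℝ)..T, (2 * -QN2 a N (fun n => c n t) 0 + 2 * (C * Q * (M * M))) :=
          intervalIntegral.integral_mono_on hT (hgain_cont.intervalIntegrable_of_Icc hT)
            ((hR.const_mul 2).add intervalIntegrable_const) fun t ht =>
              QN1_add_QN3_le (hd t ht) ha hGB hi (hM t ht)
      _ = _ := by
          rw [intervalIntegral.integral_add (hR.const_mul 2) intervalIntegrable_const,
            intervalIntegral.integral_const_mul, intervalIntegral.integral_const, sub_zero,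
            smul_eq_mul]
  have hci : c i 0 ≤ M := (le_weightedMass (hd 0 ⟨le_rfl, hT⟩) hi).trans (hM 0 ⟨le_rfl, hT⟩)
  have hloss := integral_neg_QN2_zero_le hzero hGB hT hsol hpos hM
  linarith

end IsTruncSolIso

/-- Lemma 4.6: uniform-in-`N` bound on the `L¹(0,T)` norm of `dc_i^N/dt`. -/
theorem truncated_derivative_L1_bound
    (a : ℕ → ℕ → ℕ → ℝ) (ha : ∀ i j k, 0 ≤ a i j k)
    (hzero : ∀ p : ℕ, 1 ≤ p → a p 0 p = 0)
    (C Q : ℝ) (q : ℕ → ℕ → ℝ) (hGB : GB a C Q q)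
    (c0 : ℕ → ℝ) (hc0 : ∀ i, 0 ≤ c0 i)
    (hX : Summable (fun i : ℕ => (1 + (i : ℝ)) * c0 i))
    (T : ℝ) (hT : 0 < T) (i : ℕ) :
    ∃ Γ : ℝ, 0 < Γ ∧
      ∀ N : ℕ, i ≤ N → 2 ≤ N →
        ∀ c : ℕ → ℝ → ℝ, IsTruncSolIso a N (Set.Icc 0 T) c →
          (∀ j, j ≤ N → c j 0 = c0 j) →
          (∀ j, j ≤ N → ∀ t ∈ Set.Icc (0 : ℝ) T, 0 ≤ c j t) →
          (∫ t in (0 : ℝ)..T, |deriv (c i) t|) ≤ Γ := by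
  set M := ∑' j : ℕ, (1 + (j : ℝ)) * c0 j
  have hterm : ∀ j : ℕ, 0 ≤ (1 + (j : ℝ)) * c0 j := fun j => mul_nonneg (by positivity) (hc0 j)
  have hM₀ : 0 ≤ M := tsum_nonneg hterm
  have hCQ := hGB.zero_le_mul
  refine ⟨5 * M + 8 * T * (C * Q * (M * M)) + 1, by positivity, ?_⟩
  intro N hi _ c hsol hinit hpos
  have hM : ∀ t ∈ Set.Icc 0 T, weightedMass N (fun n => c n t) ≤ M := fun t ht => by
    rw [hsol.weightedMass_eq ht, weightedMass,
      sum_congr rfl fun j hj => by rw [hinit j (Nat.lt_succ_iff.mp (mem_range.mp hj))]]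
    exact hX.sum_le_tsum _ fun j _ => hterm j
  linarith [hsol.integral_abs_deriv_le_of_weightedMass_le hzero hGB hT.le hpos hM ha hi]
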